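/- For all φ, ψ ∈ L_CPL with Var(ψ) ⊆ Var(φ), the formula I φ̄ → I ψ̄ is derivable in the proof system Log, where χ̄ = ⋀_{p ∈ Var(χ)} (p ∨ ¬p). -/

import Mathlib

/-- Formulas of classical propositional logic `L_CPL` over a countable set
of atomic propositions (represented by natural numbers). -/
inductive CPL : Type
  | top : CPL
  | atom : ℕ → CPL
  | neg : CPL → CPL
  | or : CPL → CPL → CPL
  | and : CPL → CPL → CPL
  deriving DecidableEq
/-- `Var(φ)`: the (finite) set of atomic propositions occurring in `φ`. -/
def CPL.var : CPL → Finset ℕ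
  | .top => ∅
  | .atom p => {p}
  | .neg φ => φ.var
  | .or φ ψ => φ.var ∪ ψ.var
  | .and φ ψ => φ.var ∪ ψ.var

/-- `p̄ := p ∨ ¬p`. -/
def pbar (p : ℕ) : CPL := .or (.atom p) (.neg (.atom p))

/-- Conjunction of a list of `L_CPL` formulas (empty conjunction is `⊤`). -/
def conjList : List CPL → CPL
  | [] => .top
  | [α] => α
  | α :: β :: rest => .and α (conjList (β :: rest))

/-- `φ̄ := ⋀_{p ∈ Var(φ)} (p ∨ ¬p)`, with the conjuncts taken in the fixed
(increasing) enumeration order of the atomic propositions. -/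
def CPL.bar (φ : CPL) : CPL := conjList ((φ.var.sort (· ≤ ·)).map pbar)
/-- Formulas of the language `L_Int`, extending `L_CPL` (embedded via `of`) by
negation, disjunction, conjunction, the global modality `⊞` (`box`) and the
intention modality `I` (`int`), which applies only to `L_CPL` formulas. -/
inductive Form : Type
  | of : CPL → Form
  | neg : Form → Form
  | or : Form → Form → Form
  | and : Form → Form → Form
  | box : Form → Form
  | int : CPL → Form
  deriving DecidableEq
/-- Material implication in `L_Int`: `φ → ψ := ¬φ ∨ ψ`. -/
def Form.imp (φ ψ : Form) : Form := .or (.neg φ) ψ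

/-- Material biconditional in `L_Int`: `φ ↔ ψ := (φ → ψ) ∧ (ψ → φ)`. -/
def Form.iff (φ ψ : Form) : Form := .and (φ.imp ψ) (ψ.imp φ)

/-- `⊥ := ¬⊤`. -/
def Form.bot : Form := .neg (.of .top)

/-- Boolean evaluation of `L_CPL` formulas under a valuation of the atoms. -/
def CPL.eval (v : ℕ → Bool) : CPL → Bool
  | .top => true
  | .atom p => v p
  | .neg φ => !φ.eval v
  | .or φ ψ => φ.eval v || ψ.eval v
  | .and φ ψ => φ.eval v && ψ.eval v

/-- Boolean evaluation of `L_Int` formulas, treating `⊞`- and `I`-formulas as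
atoms (evaluated by `u`). -/
def Form.eval (v : ℕ → Bool) (u : Form → Bool) : Form → Bool
  | .of α => α.eval v
  | .neg φ => !φ.eval v u
  | .or φ ψ => φ.eval v u || ψ.eval v u
  | .and φ ψ => φ.eval v u && ψ.eval v u
  | .box φ => u (.box φ)
  | .int α => u (.int α)

/-- Classical propositional tautologies of `L_Int` (with modal formulas
treated as atoms). -/
def Taut (φ : Form) : Prop := ∀ v u, φ.eval v u = true

/-- Derivability in the proof system `Log`: classical tautologies and Modus
Ponens; `S5` axioms and necessitation for `⊞`; and the intention axioms
Ax1: `I⊤`; Ax2: `Iφ → Iφ̄`; Ax3: `Iφ → ¬I¬φ`; Ax4: `(Iφ ∧ Iψ) ↔ I(φ ∧ ψ)`;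
Ax5: `⊞(ψ → φ) → ((Iψ ∧ Iφ̄) → Iφ)`. -/
inductive Deriv : Set Form → Form → Prop
  | prem {Γ : Set Form} {φ : Form} : φ ∈ Γ → Deriv Γ φ
  | taut {Γ : Set Form} {φ : Form} : Taut φ → Deriv Γ φ
  | mp {Γ : Set Form} {φ ψ : Form} :
      Deriv Γ (φ.imp ψ) → Deriv Γ φ → Deriv Γ ψ
  | boxK {Γ : Set Form} (φ ψ : Form) :
      Deriv Γ ((Form.box (φ.imp ψ)).imp ((Form.box φ).imp (Form.box ψ)))
  | boxT {Γ : Set Form} (φ : Form) : Deriv Γ ((Form.box φ).imp φ)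
  | box5 {Γ : Set Form} (φ : Form) :
      Deriv Γ ((Form.neg (Form.box φ)).imp (Form.box (Form.neg (Form.box φ))))
  | nec {Γ : Set Form} {φ : Form} : Deriv ∅ φ → Deriv Γ (Form.box φ)
  | ax1 {Γ : Set Form} : Deriv Γ (Form.int .top)
  | ax2 {Γ : Set Form} (α : CPL) :
      Deriv Γ ((Form.int α).imp (Form.int α.bar))
  | ax3 {Γ : Set Form} (α : CPL) :
      Deriv Γ ((Form.int α).imp (Form.neg (Form.int (CPL.neg α))))
  | ax4 {Γ : Set Form} (α β : CPL) :
      Deriv Γ ((Form.and (.int α) (.int β)).iff (Form.int (.and α β)))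
  | ax5 {Γ : Set Form} (α β : CPL) :
      Deriv Γ ((Form.box ((Form.of β).imp (Form.of α))).imp
        ((Form.and (.int β) (.int α.bar)).imp (Form.int α)))

/-- A set of formulas is `Log`-consistent if `⊥` is not derivable from it. -/
def LogConsistent (Γ : Set Form) : Prop := ¬ Deriv Γ Form.bot

/-- A maximally `Log`-consistent set: consistent with no proper consistent
extension. -/
def MCS (Γ : Set Form) : Prop :=
  LogConsistent Γ ∧ ∀ Δ, LogConsistent Δ → Γ ⊆ Δ → Δ = Γ

/-!
By Ax4, `I` distributes over conjunction in both directions, so `I(⋀ l)` proves `I α` for every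
conjunct `α ∈ l`, and conversely the `I α` for all `α ∈ l` together prove `I(⋀ l)` (by Ax1 when
`l` is empty). Since `Var(ψ) ⊆ Var(φ)`, every conjunct `p ∨ ¬p` of `ψ̄` is a conjunct of `φ̄`.
-/

section Tautologies

variable (A B C : Form)

theorem taut_imp_self : Taut (A.imp A) := by
  intro v u
  simp only [Form.imp, Form.eval]
  cases A.eval v u <;> rfl

theorem taut_and_imp_left : Taut ((A.and B).imp A) := by
  intro v u
  simp only [Form.imp, Form.eval]
  cases A.eval v u <;> cases B.eval v u <;> rfl

theorem taut_and_imp_right : Taut ((A.and B).imp B) := by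
  intro v u
  simp only [Form.imp, Form.eval]
  cases A.eval v u <;> cases B.eval v u <;> rfl

theorem taut_imp_intro : Taut (B.imp (A.imp B)) := by
  intro v u
  simp only [Form.imp, Form.eval]
  cases A.eval v u <;> cases B.eval v u <;> rfl

theorem taut_imp_trans : Taut ((A.imp B).imp ((B.imp C).imp (A.imp C))) := by
  intro v u
  simp only [Form.imp, Form.eval]
  cases A.eval v u <;> cases B.eval v u <;> cases C.eval v u <;> rfl

theorem taut_imp_and_intro : Taut ((A.imp B).imp ((A.imp C).imp (A.imp (B.and C)))) := by
  intro v u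
  simp only [Form.imp, Form.eval]
  cases A.eval v u <;> cases B.eval v u <;> cases C.eval v u <;> rfl

end Tautologies

namespace Deriv

variable {Γ : Set Form} {A B C : Form}

theorem imp_self (A : Form) : Deriv Γ (A.imp A) :=
  taut (taut_imp_self A)

theorem imp_intro (hB : Deriv Γ B) : Deriv Γ (A.imp B) :=
  (taut (taut_imp_intro A B)).mp hB

theorem imp_trans (hAB : Deriv Γ (A.imp B)) (hBC : Deriv Γ (B.imp C)) : Deriv Γ (A.imp C) :=
  ((taut (taut_imp_trans A B C)).mp hAB).mp hBC

theorem and_imp_left : Deriv Γ ((A.and B).imp A) :=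
  taut (taut_and_imp_left A B)

theorem and_imp_right : Deriv Γ ((A.and B).imp B) :=
  taut (taut_and_imp_right A B)

theorem imp_and_intro (hB : Deriv Γ (A.imp B)) (hC : Deriv Γ (A.imp C)) :
    Deriv Γ (A.imp (B.and C)) :=
  ((taut (taut_imp_and_intro A B C)).mp hB).mp hC

theorem iff_mp (h : Deriv Γ (A.iff B)) : Deriv Γ (A.imp B) :=
  and_imp_left.mp h

theorem iff_mpr (h : Deriv Γ (A.iff B)) : Deriv Γ (B.imp A) :=
  and_imp_right.mp h

theorem int_conjList_imp_int_of_mem {l : List CPL} {α : CPL} (hα : α ∈ l) :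
    Deriv Γ ((Form.int (conjList l)).imp (Form.int α)) := by
  induction l with
  | nil => simp at hα
  | cons β l ih =>
    cases l with
    | nil =>
      rw [List.mem_singleton.mp hα]
      exact imp_self _
    | cons γ l =>
      have hsplit := iff_mpr (ax4 (Γ := Γ) β (conjList (γ :: l)))
      rcases List.mem_cons.mp hα with rfl | hα
      · exact imp_trans hsplit and_imp_left
      · exact imp_trans hsplit (imp_trans and_imp_right (ih hα))

theorem imp_int_conjList {l : List CPL} (h : ∀ α ∈ l, Deriv Γ (A.imp (Form.int α))) :
    Deriv Γ (A.imp (Form.int (conjList l))) := by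
  induction l with
  | nil => exact imp_intro ax1
  | cons β l ih =>
    cases l with
    | nil => exact h β List.mem_cons_self
    | cons γ l =>
      have hβ := h β List.mem_cons_self
      have hrest := ih fun α hα => h α (List.mem_cons_of_mem β hα)
      exact imp_trans (imp_and_intro hβ hrest) (iff_mp (ax4 β (conjList (γ :: l))))

theorem int_conjList_mono {l l' : List CPL} (h : l' ⊆ l) :
    Deriv Γ ((Form.int (conjList l)).imp (Form.int (conjList l'))) :=
  imp_int_conjList fun _ hα => int_conjList_imp_int_of_mem (h hα)

end Deriv

/-- For all `φ, ψ ∈ L_CPL` with `Var(ψ) ⊆ Var(φ)`, the formula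
`Iφ̄ → Iψ̄` is derivable in `Log`. -/
theorem deriv_int_bar_mono (φ ψ : CPL) (h : ψ.var ⊆ φ.var) :
    Deriv ∅ ((Form.int φ.bar).imp (Form.int ψ.bar)) := by
  refine Deriv.int_conjList_mono fun α hα => ?_
  obtain ⟨p, hp, rfl⟩ := List.mem_map.mp hα
  exact List.mem_map_of_mem <| (Finset.mem_sort _).mpr <| h <| (Finset.mem_sort _).mp hp
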